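/- If a solvable contact Lie algebra 𝔤 of dimension 2n+1 has derived ideal 𝔑 = [𝔤,𝔤] of codimension 1, then the center Z(𝔑) of 𝔑 has dimension at most 2. -/

import Mathlib

/-!
`∂η` is nondegenerate on the hyperplane `ker η`. If `η ⁅V, W⁆ = 0`, then `V ∩ ker η` and
`W ∩ ker η` are `∂η`-orthogonal inside `ker η`, so their dimensions add up to at most
`dim ker η = dim L - 1`; each of them has codimension at most one in `V` resp. `W`, hence
`dim V + dim W ≤ dim L + 1`. For `V = Z(𝔑)` and `W = 𝔑` this reads `dim Z(𝔑) + 2n ≤ 2n + 2`.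
-/

open Module

/-- `η` is a contact form on the odd-dimensional real Lie algebra `L`: equivalently to the
condition `(∂η)^n ∧ η ≠ 0` (with `dim L = 2n+1`, `∂η (x,y) = -η ⁅x,y⁆`), `η ≠ 0` and the
2-form `∂η` is nondegenerate on the kernel of `η`. -/
def IsContactForm {L : Type*} [LieRing L] [LieAlgebra ℝ L] (η : Module.Dual ℝ L) : Prop :=
  η ≠ 0 ∧ ∀ x : L, η x = 0 → (∀ y : L, η y = 0 → η ⁅x, y⁆ = 0) → x = 0

/-- `α` is an exact symplectic form on the even-dimensional real Lie algebra `L`: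
equivalently to `(∂α)^m ≠ 0` (with `dim L = 2m`), the 2-form `∂α (x,y) = -α ⁅x,y⁆`
is nondegenerate. -/
def IsExactSymplecticForm {L : Type*} [LieRing L] [LieAlgebra ℝ L] (α : Module.Dual ℝ L) : Prop :=
  ∀ x : L, (∀ y : L, α ⁅x, y⁆ = 0) → x = 0

lemma Submodule.finrank_comap_subtype {R M : Type*} [Ring R] [AddCommGroup M] [Module R M]
    (p q : Submodule R M) : finrank R (q.comap p.subtype) = finrank R ↥(p ⊓ q) := by
  rw [← Submodule.map_comap_subtype, Submodule.finrank_map_subtype_eq]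

lemma Module.Dual.finrank_le_finrank_ker_inf_add_one {K V : Type*} [Field K] [AddCommGroup V]
    [Module K V] (f : Module.Dual K V) (W : Submodule K V) [FiniteDimensional K W] :
    finrank K W ≤ finrank K ↥(LinearMap.ker f ⊓ W) + 1 := by
  have hrange : finrank K (LinearMap.range (f.domRestrict W)) ≤ 1 := by
    simpa using Submodule.finrank_le (LinearMap.range (f.domRestrict W))
  rw [← LinearMap.finrank_range_add_finrank_ker (f.domRestrict W), LinearMap.ker_domRestrict,
    Submodule.finrank_comap_subtype, inf_comm]
  omega

section LieBracketForm

variable {L : Type*} [LieRing L] [LieAlgebra ℝ L]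

/-- This is `-∂η`; the sign is irrelevant for orthogonality. -/
def lieBracketForm (η : Module.Dual ℝ L) : LinearMap.BilinForm ℝ L :=
  LinearMap.mk₂ ℝ (fun x y => η ⁅x, y⁆)
    (fun x x' y => by simp [add_lie]) (fun a x y => by simp [smul_lie])
    (fun x y y' => by simp [lie_add]) (fun a x y => by simp [lie_smul])

namespace IsContactForm

variable [FiniteDimensional ℝ L] {η : Module.Dual ℝ L}

lemma nondegenerate_restrict_ker (hη : IsContactForm η) :
    ((lieBracketForm η).restrict (LinearMap.ker η)).Nondegenerate :=
  LinearMap.BilinForm.Nondegenerate.ofSeparatingLeft fun x hx =>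
    Subtype.ext <| hη.2 x x.2 fun y hy => hx ⟨y, hy⟩

theorem finrank_add_finrank_le (hη : IsContactForm η) {V W : Submodule ℝ L}
    (hVW : ∀ v ∈ V, ∀ w ∈ W, η ⁅v, w⁆ = 0) :
    finrank ℝ V + finrank ℝ W ≤ finrank ℝ L + 1 := by
  have hV := η.finrank_le_finrank_ker_inf_add_one V
  have hW := η.finrank_le_finrank_ker_inf_add_one W
  have hker := Module.Dual.finrank_ker_add_one_of_ne_zero hη.1
  have hKV := Submodule.finrank_le (V.comap (LinearMap.ker η).subtype)
  have hKW : W.comap (LinearMap.ker η).subtype ≤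
      ((lieBracketForm η).restrict (LinearMap.ker η)).orthogonal
        (V.comap (LinearMap.ker η).subtype) :=
    fun w hw v hv => hVW v hv w hw
  have hperp := Submodule.finrank_mono hKW
  rw [LinearMap.BilinForm.finrank_orthogonal hη.nondegenerate_restrict_ker,
    Submodule.finrank_comap_subtype, Submodule.finrank_comap_subtype] at hperp
  rw [Submodule.finrank_comap_subtype] at hKV
  omega

theorem finrank_center_add_finrank_le (hη : IsContactForm η) (I : LieSubalgebra ℝ L) :
    finrank ℝ (LieAlgebra.center ℝ I) + finrank ℝ I ≤ finrank ℝ L + 1 := by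
  have hcomm : ∀ z ∈ (LieAlgebra.center ℝ I : Submodule ℝ I).map I.toSubmodule.subtype,
      ∀ y ∈ I.toSubmodule, η ⁅z, y⁆ = 0 := by
    rintro _ ⟨z, hz, rfl⟩ y hy
    have hyz : ⁅(⟨y, hy⟩ : I), z⁆ = 0 := (LieModule.mem_maxTrivSubmodule ℝ I I z).mp hz ⟨y, hy⟩
    change η ⁅(z : L), y⁆ = 0
    rw [← lie_skew, ← LieSubalgebra.coe_bracket I ⟨y, hy⟩ z, hyz, ZeroMemClass.coe_zero,
      neg_zero, map_zero]
  have h := hη.finrank_add_finrank_le hcomm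
  rwa [Submodule.finrank_map_subtype_eq] at h

end IsContactForm

end LieBracketForm

theorem solvable_codim_one_derived_center_general {L : Type*} [LieRing L] [LieAlgebra ℝ L]
    [FiniteDimensional ℝ L]
    (n : ℕ) (hdim : finrank ℝ L = 2 * n + 1)
    (η : Module.Dual ℝ L) (hη : IsContactForm η)
    (hN : finrank ℝ ↥(LieAlgebra.derivedSeries ℝ L 1) = 2 * n) :
    finrank ℝ ↥(LieAlgebra.center ℝ ↥(LieAlgebra.derivedSeries ℝ L 1)) ≤ 2 := by
  have h : finrank ℝ ↥(LieAlgebra.center ℝ ↥(LieAlgebra.derivedSeries ℝ L 1)) +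
      finrank ℝ ↥(LieAlgebra.derivedSeries ℝ L 1) ≤ finrank ℝ L + 1 :=
    hη.finrank_center_add_finrank_le (LieAlgebra.derivedSeries ℝ L 1).toLieSubalgebra
  omega

/-- If a solvable contact Lie algebra of dimension `2n+1` has derived ideal
`𝔑 = [𝔤,𝔤]` of codimension 1, then the center of `𝔑` has dimension at most 2. -/
theorem solvable_codim_one_derived_center {L : Type*} [LieRing L] [LieAlgebra ℝ L]
    [FiniteDimensional ℝ L] [LieAlgebra.IsSolvable L]
    (n : ℕ) (hn : 1 ≤ n) (hdim : finrank ℝ L = 2 * n + 1)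
    (η : Module.Dual ℝ L) (hη : IsContactForm η)
    (hN : finrank ℝ ↥(LieAlgebra.derivedSeries ℝ L 1) = 2 * n) :
    finrank ℝ ↥(LieAlgebra.center ℝ ↥(LieAlgebra.derivedSeries ℝ L 1)) ≤ 2 :=
  solvable_codim_one_derived_center_general n hdim η hη hN
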